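/- (Tikhonov-type regularization convergence.) Let D ⊆ ℝ^d × ℝ^p be a nonempty closed convex set, L : ℝ^p → ℝ and J : ℝ^d → ℝ continuous strictly convex functions with compact sublevel sets. Let h* be the (unique) h-component minimizing L over D, and let λ* be the unique minimizer of J over { λ : (λ, h*) ∈ D } (assumed nonempty). For each n let (λ_n, h_n) be the unique minimizer of L(h) + (1/n) J(λ) over D. Then (λ_n, h_n) → (λ*, h*) as n → ∞. -/

import Mathlib

/-!
Comparing the penalized minimizer `z = (λ, h)` with the cascade optimum `(λ*, h*)` gives
`J λ ≤ J λ*` and `L h + t J λ ≤ L h* + t J λ*` for every penalty weight `t > 0`. The first bound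
keeps the minimizers in one compact sublevel set; passing to the limit along a convergent
subsequence (`t = 1/n → 0`) shows that every cluster point `w ∈ D` satisfies `L w.2 ≤ L h*` and
`J w.1 ≤ J λ*`. Strict convexity of `L` on the convex projection of `D`, then of `J` on the convex
slice `{λ | (λ, h*) ∈ D}`, forces `w = (λ*, h*)`.
-/

open Filter Topology Set

lemma StrictConvexOn.eq_of_le_of_isMinOn {E : Type*} [AddCommGroup E] [Module ℝ E]
    {f : E → ℝ} {s : Set E} {x y : E} (hf : StrictConvexOn ℝ s f) (hx : IsMinOn f s x)
    (hxs : x ∈ s) (hys : y ∈ s) (hyx : f y ≤ f x) : y = x :=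
  hf.eq_of_isMinOn (isMinOn_iff.2 fun z hz => hyx.trans (isMinOn_iff.1 hx z hz)) hx hys hxs

lemma Convex.slice_fst {E F : Type*} [AddCommGroup E] [Module ℝ E] [AddCommGroup F] [Module ℝ F]
    {D : Set (E × F)} (hD : Convex ℝ D) (h : F) : Convex ℝ {l | (l, h) ∈ D} := by
  intro x hx y hy a b ha hb hab
  simpa [← add_smul, hab] using hD hx hy ha hb hab

section Cascade

variable {E F : Type*} {L : F → ℝ} {J : E → ℝ} {D : Set (E × F)} {lam : E} {hstar : F}

lemma penalized_min_J_le {t : ℝ} {z : E × F} (ht : 0 < t)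
    (hLmin : ∀ z ∈ D, L hstar ≤ L z.2) (hzD : z ∈ D)
    (hpen : L z.2 + t * J z.1 ≤ L hstar + t * J lam) : J z.1 ≤ J lam := by
  have := hLmin z hzD
  nlinarith

lemma penalized_min_le_of_le_one {t : ℝ} {z : E × F} (ht : t ≤ 1) (hJ : J z.1 ≤ J lam)
    (hpen : L z.2 + t * J z.1 ≤ L hstar + t * J lam) : L z.2 + J z.1 ≤ L hstar + J lam := by
  nlinarith

lemma le_cascade_min_of_tendsto [TopologicalSpace E] [TopologicalSpace F]
    {ι : Type*} {l : Filter ι} [l.NeBot] {t : ι → ℝ} {z : ι → E × F} {w : E × F}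
    (hLcont : Continuous L) (hJcont : Continuous J) (hD : IsClosed D)
    (ht : Tendsto t l (𝓝 0)) (hz : Tendsto z l (𝓝 w)) (hzD : ∀ᶠ i in l, z i ∈ D)
    (hJ : ∀ᶠ i in l, J (z i).1 ≤ J lam)
    (hpen : ∀ᶠ i in l, L (z i).2 + t i * J (z i).1 ≤ L hstar + t i * J lam) :
    w ∈ D ∧ L w.2 ≤ L hstar ∧ J w.1 ≤ J lam := by
  have hJz : Tendsto (fun i => J (z i).1) l (𝓝 (J w.1)) :=
    (hJcont.tendsto _).comp hz.fst_nhds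
  have hLz : Tendsto (fun i => L (z i).2) l (𝓝 (L w.2)) :=
    (hLcont.tendsto _).comp hz.snd_nhds
  refine ⟨hD.mem_of_tendsto hz hzD, ?_, le_of_tendsto hJz hJ⟩
  have hlhs := hLz.add (ht.mul hJz)
  have hrhs := (tendsto_const_nhds (x := L hstar)).add (ht.mul_const (J lam))
  simpa using le_of_tendsto_of_tendsto hlhs hrhs hpen

variable [AddCommGroup E] [Module ℝ E] [AddCommGroup F] [Module ℝ F]

lemma eq_cascade_min_of_le (hLconv : StrictConvexOn ℝ univ L) (hJconv : StrictConvexOn ℝ univ J)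
    (hD : Convex ℝ D) (hLmin : ∀ z ∈ D, L hstar ≤ L z.2) (hlam : (lam, hstar) ∈ D)
    (hJmin : ∀ l, (l, hstar) ∈ D → J lam ≤ J l) {w : E × F} (hwD : w ∈ D)
    (hLw : L w.2 ≤ L hstar) (hJw : J w.1 ≤ J lam) : w = (lam, hstar) := by
  have hsnd : w.2 = hstar := by
    refine (hLconv.subset (subset_univ _) (hD.linear_image (LinearMap.snd ℝ E F))
      ).eq_of_le_of_isMinOn ?_ ⟨_, hlam, rfl⟩ ⟨w, hwD, rfl⟩ hLw
    rintro _ ⟨z, hz, rfl⟩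
    exact hLmin z hz
  have hslice : (w.1, hstar) ∈ D := hsnd ▸ hwD
  have hfst : w.1 = lam :=
    (hJconv.subset (subset_univ _) (hD.slice_fst hstar)).eq_of_le_of_isMinOn
      hJmin hlam hslice hJw
  exact Prod.ext hfst hsnd

end Cascade

theorem stmt_6_general (d p : ℕ) (L : (Fin p → ℝ) → ℝ) (J : (Fin d → ℝ) → ℝ)
    (hLcont : Continuous L) (hJcont : Continuous J)
    (hLconv : StrictConvexOn ℝ Set.univ L) (hJconv : StrictConvexOn ℝ Set.univ J)
    (D : Set ((Fin d → ℝ) × (Fin p → ℝ)))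
    (hDclosed : IsClosed D) (hDconv : Convex ℝ D)
    (hcompact : ∀ (n : ℕ), 1 ≤ n → ∀ c : ℝ,
      IsCompact {z : (Fin d → ℝ) × (Fin p → ℝ) | L z.2 + (1 / (n : ℝ)) * J z.1 ≤ c})
    (lam : Fin d → ℝ) (hstar : Fin p → ℝ)
    -- `h*` is the `h`-component of a point of `D` and minimizes `L` over `D`
    (hLmin : ∀ z ∈ D, L hstar ≤ L z.2)
    -- `λ*` minimizes `J` over `{λ : (λ, h*) ∈ D}`
    (hlamfeas : (lam, hstar) ∈ D)
    (hJmin : ∀ l : Fin d → ℝ, (l, hstar) ∈ D → J lam ≤ J l)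
    -- `(λ_n, h_n)` minimizes `L h + (1/n) J λ` over `D`
    (z : ℕ → (Fin d → ℝ) × (Fin p → ℝ))
    (hzmem : ∀ (n : ℕ), 1 ≤ n → z n ∈ D)
    (hzmin : ∀ (n : ℕ), 1 ≤ n → ∀ z' ∈ D,
      L (z n).2 + (1 / (n : ℝ)) * J (z n).1 ≤ L z'.2 + (1 / (n : ℝ)) * J z'.1) :
    Filter.Tendsto z Filter.atTop (nhds (lam, hstar)) := by
  have hpen n (hn : 1 ≤ n) := hzmin n hn _ hlamfeas
  have hJ n (hn : 1 ≤ n) : J (z n).1 ≤ J lam :=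
    penalized_min_J_le (by positivity) hLmin (hzmem n hn) (hpen n hn)
  refine (hcompact 1 le_rfl (L hstar + J lam)).tendsto_nhds_of_unique_mapClusterPt
    ((eventually_ge_atTop 1).mono fun n hn => ?_) fun w _ hw => ?_
  · have ht : 1 / (n : ℝ) ≤ 1 := div_le_one_of_le₀ (by exact_mod_cast hn) (by positivity)
    simpa using penalized_min_le_of_le_one ht (hJ n hn) (hpen n hn)
  obtain ⟨ψ, hψ, hzψ⟩ := hw.tendsto_subseq
  have hψ1 : ∀ᶠ i in atTop, 1 ≤ ψ i := hψ.tendsto_atTop.eventually_ge_atTop 1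
  obtain ⟨hwD, hLw, hJw⟩ := le_cascade_min_of_tendsto hLcont hJcont hDclosed
    (tendsto_one_div_atTop_nhds_zero_nat.comp hψ.tendsto_atTop) hzψ
    (hψ1.mono fun i hi => hzmem _ hi) (hψ1.mono fun i hi => hJ _ hi)
    (hψ1.mono fun i hi => hpen _ hi)
  exact eq_cascade_min_of_le hLconv hJconv hDconv hLmin hlamfeas hJmin hwD hLw hJw

/-- Tikhonov-type regularization convergence: the minimizers of
`L h + (1/n) J λ` over `D` converge to the cascade (lexicographic) optimum
`(λ*, h*)` as `n → ∞`. -/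
theorem stmt_6 (d p : ℕ) (L : (Fin p → ℝ) → ℝ) (J : (Fin d → ℝ) → ℝ)
    (hLcont : Continuous L) (hJcont : Continuous J)
    (hLconv : StrictConvexOn ℝ Set.univ L) (hJconv : StrictConvexOn ℝ Set.univ J)
    (D : Set ((Fin d → ℝ) × (Fin p → ℝ)))
    (hDne : D.Nonempty) (hDclosed : IsClosed D) (hDconv : Convex ℝ D)
    (hcompact : ∀ (n : ℕ), 1 ≤ n → ∀ c : ℝ,
      IsCompact {z : (Fin d → ℝ) × (Fin p → ℝ) | L z.2 + (1 / (n : ℝ)) * J z.1 ≤ c})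
    (lam : Fin d → ℝ) (hstar : Fin p → ℝ)
    -- `h*` is the `h`-component of a point of `D` and minimizes `L` over `D`
    (hfeas : ∃ l, (l, hstar) ∈ D)
    (hLmin : ∀ z ∈ D, L hstar ≤ L z.2)
    -- `λ*` minimizes `J` over `{λ : (λ, h*) ∈ D}`
    (hlamfeas : (lam, hstar) ∈ D)
    (hJmin : ∀ l : Fin d → ℝ, (l, hstar) ∈ D → J lam ≤ J l)
    -- `(λ_n, h_n)` minimizes `L h + (1/n) J λ` over `D`
    (z : ℕ → (Fin d → ℝ) × (Fin p → ℝ))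
    (hzmem : ∀ (n : ℕ), 1 ≤ n → z n ∈ D)
    (hzmin : ∀ (n : ℕ), 1 ≤ n → ∀ z' ∈ D,
      L (z n).2 + (1 / (n : ℝ)) * J (z n).1 ≤ L z'.2 + (1 / (n : ℝ)) * J z'.1) :
    Filter.Tendsto z Filter.atTop (nhds (lam, hstar)) :=
  stmt_6_general d p L J hLcont hJcont hLconv hJconv D hDclosed hDconv hcompact lam hstar hLmin
    hlamfeas hJmin z hzmem hzmin
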